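/- With the symbol a(k) = φ_B(k) ŝ_{-,L}(k) + (1-φ_B(k)) ŝ_{-,R}(k) as above (κ > 0), a is continuously differentiable on 𝕋, i.e. a ∈ C¹(𝕋); moreover, at k = 0 the one-sided second derivatives (equivalently one-sided derivatives of a') differ by D_+a'(0) - D_-a'(0) = (1/κ²) · sinh((β_R-β_L)/2) / (cosh(β_R/2) cosh(β_L/2)). -/

import Mathlib

noncomputable def smF (β k : ℝ) : ℝ := (1 / 2) * (1 - Real.tanh (β / 2 * Real.cos k))
noncomputable def smD (β k : ℝ) : ℝ := β / 4 * Real.sin k / Real.cosh (β / 2 * Real.cos k) ^ 2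
noncomputable def gF (κ k : ℝ) : ℝ := Real.sin k ^ 2 / (Real.sin k ^ 2 + κ ^ 2)
noncomputable def gD (κ k : ℝ) : ℝ :=
  2 * Real.sin k * Real.cos k * κ ^ 2 / (Real.sin k ^ 2 + κ ^ 2) ^ 2
noncomputable def hF (βL βR κ k : ℝ) : ℝ :=
  gD κ k * (smF βL k - smF βR k) + gF κ k * (smD βL k - smD βR k)

lemma cosh_ne (x : ℝ) : Real.cosh x ≠ 0 := (Real.cosh_pos x).ne'

lemma hasDerivAt_tanh' (x : ℝ) : HasDerivAt Real.tanh (1 / Real.cosh x ^ 2) x := by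
  have h : HasDerivAt (fun y => Real.sinh y / Real.cosh y)
      ((Real.cosh x * Real.cosh x - Real.sinh x * Real.sinh x) / Real.cosh x ^ 2) x :=
    (Real.hasDerivAt_sinh x).div (Real.hasDerivAt_cosh x) (cosh_ne x)
  have : (Real.cosh x * Real.cosh x - Real.sinh x * Real.sinh x) = 1 := by
    have := Real.cosh_sq x; nlinarith
  rw [this] at h
  exact h.congr_of_eventuallyEq (Filter.Eventually.of_forall fun y => Real.tanh_eq_sinh_div_cosh y)

lemma abs_tanh_le (x : ℝ) : |Real.tanh x| ≤ 1 := by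
  rw [Real.tanh_eq_sinh_div_cosh, abs_div, abs_of_pos (Real.cosh_pos x)]
  rw [div_le_one (Real.cosh_pos x)]
  have h := Real.cosh_sq x
  nlinarith [abs_nonneg (Real.sinh x), sq_abs (Real.sinh x), Real.cosh_pos x]

lemma hasDerivAt_smF (β k : ℝ) : HasDerivAt (smF β) (smD β k) k := by
  have hu : HasDerivAt (fun k => β / 2 * Real.cos k) (β / 2 * (-Real.sin k)) k :=
    (Real.hasDerivAt_cos k).const_mul (β / 2)
  have ht : HasDerivAt (fun k => Real.tanh (β / 2 * Real.cos k))
      ((1 / Real.cosh (β / 2 * Real.cos k) ^ 2) * (β / 2 * (-Real.sin k))) k :=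
    (hasDerivAt_tanh' _).comp k hu
  have h : HasDerivAt (smF β)
      ((1/2) * (0 - (1 / Real.cosh (β / 2 * Real.cos k) ^ 2) * (β / 2 * (-Real.sin k)))) k :=
    ((hasDerivAt_const k (1:ℝ)).sub ht).const_mul (1/2)
  convert h using 1
  unfold smD
  field_simp
  ring_nf

lemma den_pos {κ : ℝ} (hκ : 0 < κ) (k : ℝ) : 0 < Real.sin k ^ 2 + κ ^ 2 := by positivity

lemma hasDerivAt_gF {κ : ℝ} (hκ : 0 < κ) (k : ℝ) : HasDerivAt (gF κ) (gD κ k) k := by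
  have hs : HasDerivAt (fun k => Real.sin k ^ 2) (2 * Real.sin k * Real.cos k) k := by
    have := ((Real.hasDerivAt_sin k).pow 2)
    refine this.congr_deriv (Eq.symm ?_); ring
  have hd : HasDerivAt (fun k => Real.sin k ^ 2 + κ ^ 2) (2 * Real.sin k * Real.cos k) k :=
    hs.add_const _
  have h := hs.div hd (den_pos hκ k).ne'
  refine h.congr_deriv (Eq.symm ?_)
  unfold gD
  have h0 := (den_pos hκ k).ne'
  field_simp
  ring

lemma hasDerivAt_smD_zero (β : ℝ) :
    HasDerivAt (smD β) (β / 4 / Real.cosh (β / 2) ^ 2) 0 := by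
  have hnum : HasDerivAt (fun k => β / 4 * Real.sin k) (β / 4 * Real.cos 0) 0 :=
    (Real.hasDerivAt_sin 0).const_mul (β / 4)
  have hu : HasDerivAt (fun k => β / 2 * Real.cos k) (β / 2 * (-Real.sin 0)) 0 :=
    (Real.hasDerivAt_cos 0).const_mul (β / 2)
  have hden : HasDerivAt (fun k => Real.cosh (β / 2 * Real.cos k) ^ 2)
      (2 * Real.cosh (β / 2 * Real.cos 0) ^ 1 * (Real.sinh (β / 2 * Real.cos 0) * (β / 2 * (-Real.sin 0)))) 0 :=
    (((Real.hasDerivAt_cosh _).comp 0 hu)).pow 2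
  have h := hnum.div hden (by positivity)
  refine h.congr_deriv (Eq.symm ?_)
  simp [Real.sin_zero, Real.cos_zero]
  field_simp

lemma hasDerivAt_gD_zero {κ : ℝ} (hκ : 0 < κ) :
    HasDerivAt (gD κ) (2 / κ ^ 2) 0 := by
  have hnum : HasDerivAt (fun k => 2 * Real.sin k * Real.cos k * κ ^ 2)
      ((2 * Real.cos 0 * Real.cos 0 + 2 * Real.sin 0 * (-Real.sin 0)) * κ ^ 2) 0 := by
    have h1 : HasDerivAt (fun k => 2 * Real.sin k) (2 * Real.cos 0) 0 :=
      (Real.hasDerivAt_sin 0).const_mul 2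
    have h2 := (h1.mul (Real.hasDerivAt_cos 0)).mul_const (κ ^ 2)
    exact h2
  have hs : HasDerivAt (fun k => Real.sin k ^ 2 + κ ^ 2) (2 * Real.sin 0 * Real.cos 0) 0 := by
    have := ((Real.hasDerivAt_sin 0).pow 2).add_const (κ ^ 2)
    refine this.congr_deriv (Eq.symm ?_); ring
  have hden : HasDerivAt (fun k => (Real.sin k ^ 2 + κ ^ 2) ^ 2)
      (2 * (Real.sin 0 ^ 2 + κ ^ 2) ^ 1 * (2 * Real.sin 0 * Real.cos 0)) 0 := hs.pow 2
  have h := hnum.div hden (by simp; positivity)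
  refine h.congr_deriv (Eq.symm ?_)
  simp [Real.sin_zero, Real.cos_zero]
  rw [div_eq_div_iff (by positivity) (by positivity)]
  ring

lemma continuous_smD (β : ℝ) : Continuous (smD β) := by
  unfold smD
  fun_prop (disch := intros; exact pow_ne_zero 2 (cosh_ne _))

lemma continuous_tanh' : Continuous Real.tanh := by
  have : Real.tanh = fun x => Real.sinh x / Real.cosh x := funext Real.tanh_eq_sinh_div_cosh
  rw [this]
  exact Real.continuous_sinh.div Real.continuous_cosh (fun x => cosh_ne x)

lemma continuous_smF (β : ℝ) : Continuous (smF β) := by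
  unfold smF
  exact continuous_const.mul (continuous_const.sub
    (continuous_tanh'.comp (continuous_const.mul Real.continuous_cos)))

lemma continuous_gF {κ : ℝ} (hκ : 0 < κ) : Continuous (gF κ) := by
  unfold gF
  exact (Real.continuous_sin.pow 2).div ((Real.continuous_sin.pow 2).add continuous_const)
    (fun k => (den_pos hκ k).ne')

lemma continuous_gD {κ : ℝ} (hκ : 0 < κ) : Continuous (gD κ) := by
  unfold gD
  exact (((continuous_const.mul Real.continuous_sin).mul Real.continuous_cos).mul
    continuous_const).div
    (((Real.continuous_sin.pow 2).add continuous_const).pow 2)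
    (fun k => pow_ne_zero 2 (den_pos hκ k).ne')

lemma continuous_hF {κ : ℝ} (hκ : 0 < κ) (βL βR : ℝ) : Continuous (hF βL βR κ) := by
  unfold hF
  exact ((continuous_gD hκ).mul ((continuous_smF βL).sub (continuous_smF βR))).add
    ((continuous_gF hκ).mul ((continuous_smD βL).sub (continuous_smD βR)))

lemma hF_zero (βL βR κ : ℝ) : hF βL βR κ 0 = 0 := by
  simp [hF, gD, gF]

lemma gF_le {κ : ℝ} (hκ : 0 < κ) (k : ℝ) : gF κ k ≤ k ^ 2 / κ ^ 2 := by
  unfold gF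
  have h1 : Real.sin k ^ 2 ≤ k ^ 2 := Real.sin_sq_le_sq
  calc Real.sin k ^ 2 / (Real.sin k ^ 2 + κ ^ 2) ≤ Real.sin k ^ 2 / κ ^ 2 := by
        apply div_le_div_of_nonneg_left (by positivity) (by positivity)
        nlinarith [sq_nonneg (Real.sin k)]
    _ ≤ k ^ 2 / κ ^ 2 := by apply div_le_div_of_nonneg_right h1 (by positivity)

lemma abs_smF_sub_le (βL βR k : ℝ) : |smF βL k - smF βR k| ≤ 1 := by
  unfold smF
  have h1 := abs_tanh_le (βL / 2 * Real.cos k)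
  have h2 := abs_tanh_le (βR / 2 * Real.cos k)
  rw [abs_le] at *
  constructor <;> nlinarith [h1.1, h1.2, h2.1, h2.2]

lemma hasDerivAt_hF_zero {κ : ℝ} (hκ : 0 < κ) (βL βR : ℝ) :
    HasDerivAt (hF βL βR κ) (2 / κ ^ 2 * (smF βL 0 - smF βR 0)) 0 := by
  have hd : HasDerivAt (fun k => smF βL k - smF βR k) (smD βL 0 - smD βR 0) 0 :=
    (hasDerivAt_smF βL 0).sub (hasDerivAt_smF βR 0)
  have hdd : HasDerivAt (fun k => smD βL k - smD βR k)
      (βL / 4 / Real.cosh (βL / 2) ^ 2 - βR / 4 / Real.cosh (βR / 2) ^ 2) 0 :=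
    (hasDerivAt_smD_zero βL).sub (hasDerivAt_smD_zero βR)
  have h1 := ((hasDerivAt_gD_zero hκ).mul hd).add ((hasDerivAt_gF hκ 0).mul hdd)
  have he : HasDerivAt (hF βL βR κ) _ 0 := h1
  convert he using 1
  simp [gD, gF, smD]


open Real

/-- With `0 < β_L ≤ β_R`, `κ > 0`, the symbol
`a(k) = φ_B(k) ŝ_{-,L}(k) + (1-φ_B(k)) ŝ_{-,R}(k)` is `C¹` on the circle: there is a
derivative function `a'`, continuous on `[-π,π]` with matching endpoints, with
`HasDerivAt a (a' k) k` in the interior; moreover the one-sided derivatives of `a'`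
at `k = 0` jump by `D₊a'(0) - D₋a'(0) = (1/κ²) sinh((β_R-β_L)/2)/(cosh(β_R/2)cosh(β_L/2))`. -/
theorem symbol_C1_and_jump (βL βR κ : ℝ) (h1 : 0 < βL) (h2 : βL ≤ βR) (hκ : 0 < κ) :
    let sm : ℝ → ℝ → ℝ := fun β k => (1 / 2) * (1 - Real.tanh (β / 2 * Real.cos k))
    let φB : ℝ → ℝ := fun k =>
      (if 0 ≤ k then 1 else 0) * (Real.sin k ^ 2 / (Real.sin k ^ 2 + κ ^ 2))
    let a : ℝ → ℝ := fun k => φB k * sm βL k + (1 - φB k) * sm βR k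
    ∃ a' : ℝ → ℝ,
      (∀ k ∈ Set.Ioo (-π) π, HasDerivAt a (a' k) k) ∧
      ContinuousOn a' (Set.Icc (-π) π) ∧
      a' (-π) = a' π ∧
      ∃ dp dm : ℝ,
        HasDerivWithinAt a' dp (Set.Ici 0) 0 ∧
        HasDerivWithinAt a' dm (Set.Iic 0) 0 ∧
        dp - dm = (1 / κ ^ 2) * Real.sinh ((βR - βL) / 2) /
          (Real.cosh (βR / 2) * Real.cosh (βL / 2)) := by
  intro sm φB a
  set A' : ℝ → ℝ := fun k => smD βR k + (if 0 ≤ k then 1 else 0) * hF βL βR κ k with hA'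
  have hae : a = fun k => smF βR k +
      (if 0 ≤ k then 1 else 0) * (gF κ k * (smF βL k - smF βR k)) := by
    funext k
    simp only [a, φB, sm, smF, gF]
    ring
  -- derivative everywhere
  have hderiv : ∀ k : ℝ, HasDerivAt a (A' k) k := by
    intro k
    rcases lt_trichotomy k 0 with hk | hk | hk
    · have hev : (fun k => smF βR k) =ᶠ[nhds k] a := by
        filter_upwards [Iio_mem_nhds hk] with x hx
        rw [hae]
        simp [not_le.mpr (Set.mem_Iio.mp hx)]
      have := (hasDerivAt_smF βR k).congr_of_eventuallyEq hev.symm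
      simpa [hA', not_le.mpr hk] using this
    · subst hk
      have h0 : A' 0 = 0 := by simp [hA', smD, hF_zero]
      rw [h0]
      have hq : HasDerivAt (fun k => (if 0 ≤ k then (1:ℝ) else 0) *
          (gF κ k * (smF βL k - smF βR k))) 0 0 := by
        rw [hasDerivAt_iff_tendsto_slope]
        apply squeeze_zero_norm' (a := fun x => |x| / κ ^ 2)
        · filter_upwards [self_mem_nhdsWithin] with x hx
          have hx0 : x ≠ 0 := hx
          have hb : |(if 0 ≤ x then (1:ℝ) else 0) * (gF κ x * (smF βL x - smF βR x))| ≤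
              x ^ 2 / κ ^ 2 := by
            rw [abs_mul, abs_mul]
            have hgnn : 0 ≤ gF κ x := by
              unfold gF; positivity
            have := abs_smF_sub_le βL βR x
            have hgle := gF_le hκ x
            have hind : |(if 0 ≤ x then (1:ℝ) else 0)| ≤ 1 := by split <;> simp
            calc |(if 0 ≤ x then (1:ℝ) else 0)| * (|gF κ x| * |smF βL x - smF βR x|) ≤
                1 * (gF κ x * 1) := by
                  rw [abs_of_nonneg hgnn]
                  gcongr
              _ ≤ x ^ 2 / κ ^ 2 := by rw [one_mul, mul_one]; exact hgle
          have hslope : slope (fun k => (if 0 ≤ k then (1:ℝ) else 0) *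
              (gF κ k * (smF βL k - smF βR k))) 0 x =
              ((if 0 ≤ x then (1:ℝ) else 0) * (gF κ x * (smF βL x - smF βR x))) / x := by
            rw [slope_def_field]
            simp [gF]
          rw [hslope, norm_div, Real.norm_eq_abs, Real.norm_eq_abs]
          rw [div_le_div_iff₀ (abs_pos.mpr hx0) (by positivity)]
          calc |(if 0 ≤ x then (1:ℝ) else 0) * (gF κ x * (smF βL x - smF βR x))| * κ ^ 2 ≤
              (x ^ 2 / κ ^ 2) * κ ^ 2 := by gcongr
            _ = |x| * |x| := by
                rw [div_mul_cancel₀ _ (by positivity : κ ^ 2 ≠ 0), ← sq_abs x, sq]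
        · have : Filter.Tendsto (fun x : ℝ => |x| / κ ^ 2) (nhds 0) (nhds (|(0:ℝ)| / κ ^ 2)) :=
            (continuous_abs.div_const _).tendsto 0
          simpa using this.mono_left nhdsWithin_le_nhds
      have := (hasDerivAt_smF βR 0).add hq
      have hval : smD βR 0 + 0 = 0 := by simp [smD]
      rw [hval] at this
      exact this.congr_of_eventuallyEq (by rw [hae]; exact Filter.EventuallyEq.rfl)
    · have hev : (fun k => smF βR k + gF κ k * (smF βL k - smF βR k)) =ᶠ[nhds k] a := by
        filter_upwards [Ioi_mem_nhds hk] with x hx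
        rw [hae]
        simp [le_of_lt (Set.mem_Ioi.mp hx)]
      have hd : HasDerivAt (fun k => smF βR k + gF κ k * (smF βL k - smF βR k))
          (smD βR k + (gD κ k * (smF βL k - smF βR k) + gF κ k * (smD βL k - smD βR k))) k :=
        (hasDerivAt_smF βR k).add ((hasDerivAt_gF hκ k).mul
          ((hasDerivAt_smF βL k).sub (hasDerivAt_smF βR k)))
      have := hd.congr_of_eventuallyEq hev.symm
      simpa [hA', hF, le_of_lt hk] using this
  refine ⟨A', fun k _ => hderiv k, ?_, ?_, ?_⟩
  · -- continuity
    apply Continuous.continuousOn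
    apply (continuous_smD βR).add
    rw [continuous_iff_continuousAt]
    intro k
    rcases lt_trichotomy k 0 with hk | hk | hk
    · have hc : ContinuousAt (fun _ : ℝ => (0:ℝ)) k := continuousAt_const
      apply hc.congr
      filter_upwards [Iio_mem_nhds hk] with x hx
      simp [not_le.mpr (Set.mem_Iio.mp hx)]
    · subst hk
      have key : Filter.Tendsto (fun x => (if 0 ≤ x then (1:ℝ) else 0) * hF βL βR κ x)
          (nhds 0) (nhds 0) := by
        apply squeeze_zero_norm (a := fun x => |hF βL βR κ x|)
        · intro x
          rw [norm_mul, Real.norm_eq_abs, Real.norm_eq_abs]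
          have : |(if 0 ≤ x then (1:ℝ) else 0)| ≤ 1 := by split <;> simp
          calc |(if 0 ≤ x then (1:ℝ) else 0)| * |hF βL βR κ x| ≤ 1 * |hF βL βR κ x| := by gcongr
            _ = |hF βL βR κ x| := one_mul _
        · have := ((continuous_hF hκ βL βR).abs.tendsto 0)
          simpa [hF_zero] using this
      have h0 : (if (0:ℝ) ≤ 0 then (1:ℝ) else 0) * hF βL βR κ 0 = 0 := by
        simp [hF_zero]
      unfold ContinuousAt
      rw [show (fun x => (if 0 ≤ x then (1:ℝ) else 0) * hF βL βR κ x) 0 = 0 from h0]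
      exact key
    · apply ContinuousAt.congr ((continuous_hF hκ βL βR).continuousAt)
      filter_upwards [Ioi_mem_nhds hk] with x hx
      simp [Set.mem_Ioi.mp hx |>.le]
  · -- endpoints
    have hπ : ¬ (0:ℝ) ≤ -π := by linarith [Real.pi_pos]
    simp [hA', smD, hF, gD, gF, Real.sin_pi, hπ, Real.pi_pos.le]
  · -- jump
    refine ⟨βR / 4 / Real.cosh (βR / 2) ^ 2 + 2 / κ ^ 2 * (smF βL 0 - smF βR 0),
      βR / 4 / Real.cosh (βR / 2) ^ 2, ?_, ?_, ?_⟩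
    · have hd := ((hasDerivAt_smD_zero βR).add (hasDerivAt_hF_zero hκ βL βR)).hasDerivWithinAt
        (s := Set.Ici (0:ℝ))
      apply hd.congr
      · intro x hx
        simp [hA', Set.mem_Ici.mp hx]
      · simp [hA']
    · have hd := (hasDerivAt_smD_zero βR).hasDerivWithinAt (s := Set.Iic (0:ℝ))
      apply hd.congr
      · intro x hx
        rcases eq_or_lt_of_le (Set.mem_Iic.mp hx) with h | h
        · subst h; simp [hA', hF_zero]
        · simp [hA', not_le.mpr h]
      · simp [hA', hF_zero]
    · have hcL := cosh_ne (βL / 2)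
      have hcR := cosh_ne (βR / 2)
      have hκ2 : κ ^ 2 ≠ 0 := by positivity
      have key : Real.tanh (βR / 2) - Real.tanh (βL / 2) =
          Real.sinh ((βR - βL) / 2) / (Real.cosh (βR / 2) * Real.cosh (βL / 2)) := by
        rw [show (βR - βL) / 2 = βR / 2 - βL / 2 by ring, Real.sinh_sub,
          Real.tanh_eq_sinh_div_cosh, Real.tanh_eq_sinh_div_cosh]
        field_simp
      have lhs : βR / 4 / Real.cosh (βR / 2) ^ 2 + 2 / κ ^ 2 * (smF βL 0 - smF βR 0) -
          βR / 4 / Real.cosh (βR / 2) ^ 2 =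
          1 / κ ^ 2 * (Real.tanh (βR / 2) - Real.tanh (βL / 2)) := by
        simp only [smF, Real.cos_zero, mul_one]
        ring
      rw [lhs, key, mul_div_assoc]
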